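/- Algebraic core of the torsion criterion for linear combinations of local Heegner divisors (Lemma 3.5): let λ_1,…,λ_r ∈ W and a_1,…,a_r ∈ ℝ. The following are equivalent: (a) there exists Q ∈ ℝ such that Σ_i a_i·Im F_{λ_i}(t,t') = Q·Im⟨t',t⟩ for all t,t' ∈ W; (b) Σ_i a_i·[F_{λ_i}(t,t') − (⟨λ_i,λ_i⟩/n)·⟨t',t⟩] = 0 for all t,t' ∈ W. -/

import Mathlib

/-!
Write `∑ aᵢ F_{λᵢ}(t,t') = P(t,t') + ⟨M t', t⟩` with `P` complex bilinear and
`M t' = ∑ aᵢ ⟨t',λᵢ⟩ λᵢ`. Both sides of (a) are `ℂ`-linear in `t'`, so their imaginary parts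
determine them and (a) is the complex identity `P(t,t') + ⟨M t', t⟩ = Q ⟨t',t⟩`. Its two sides
split into parts linear and conjugate-linear in `t`, hence `P = 0` and `⟨M t', t⟩ = Q ⟨t',t⟩`.
The form is anisotropic, so `M = Q • id`, and the trace gives `Q n = ∑ aᵢ ⟨λᵢ,λᵢ⟩`, which is (b).
Conversely (b) makes `∑ aᵢ F_{λᵢ}(t,t')` the real multiple `(∑ aᵢ ⟨λᵢ,λᵢ⟩ / n) ⟨t',t⟩` of
`⟨t',t⟩` (real because the form is hermitian); taking imaginary parts gives (a).
-/

open Complex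

/-- The form `F_λ(x,y) = ⟨x,λ⟩⟨y,λ⟩ + ⟨λ,x⟩⟨y,λ⟩ (= 2Re(⟨x,λ⟩)·⟨y,λ⟩)`. -/
noncomputable def Fform {W : Type*} [AddCommGroup W] [Module ℂ W]
    (B : W →ₗ[ℂ] W →ₛₗ[starRingEnd ℂ] ℂ) (lam x y : W) : ℂ :=
  B x lam * B y lam + B lam x * B y lam

namespace Complex

variable {V : Type*} [AddCommGroup V] [Module ℂ V]

theorem linearMap_ext_of_im {f g : V →ₗ[ℂ] ℂ} (h : ∀ v, (f v).im = (g v).im) : f = g :=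
  LinearMap.ext fun v ↦ Complex.ext (by simpa using h (I • v)) (h v)

theorem linearMap_eq_zero_of_eq_conjLinear {f : V →ₗ[ℂ] ℂ} {g : V →ₗ⋆[ℂ] ℂ}
    (h : ∀ v, f v = g v) (v : V) : f v = 0 := by
  have hI := h (I • v)
  rw [map_smul, LinearMap.map_smulₛₗ, h v, conj_I, smul_eq_mul, smul_eq_mul] at hI
  have : (2 * I) * g v = 0 := by linear_combination hI
  simpa [h v, I_ne_zero] using this

end Complex

section Sesquilinear

variable {W : Type*} [AddCommGroup W] [Module ℂ W] (B : W →ₗ[ℂ] W →ₛₗ[starRingEnd ℂ] ℂ)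
  {ι : Type*} [Fintype ι] (lam : ι → W) (c : ι → ℂ)

noncomputable def rankOneSum : W →ₗ[ℂ] W :=
  ∑ i, c i • (B.flip (lam i)).smulRight (lam i)

theorem rankOneSum_apply (t : W) : rankOneSum B lam c t = ∑ i, (c i * B t (lam i)) • lam i := by
  simp [rankOneSum, mul_smul]

theorem trace_rankOneSum [FiniteDimensional ℂ W] :
    LinearMap.trace ℂ W (rankOneSum B lam c) = ∑ i, c i * B (lam i) (lam i) := by
  simp [rankOneSum]

theorem sum_mul_Fform (t t' : W) :
    ∑ i, c i * Fform B (lam i) t t' =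
      ∑ i, c i * B t (lam i) * B t' (lam i) + B (rankOneSum B lam c t') t := by
  simp only [rankOneSum_apply, map_sum, map_smul, LinearMap.sum_apply, LinearMap.smul_apply,
    smul_eq_mul, Fform, ← Finset.sum_add_distrib]
  exact Finset.sum_congr rfl fun i _ ↦ by ring

theorem sum_mul_Fform_eq_of_im (a : ι → ℝ) (Q : ℝ)
    (hQ : ∀ t t', ∑ i, a i * (Fform B (lam i) t t').im = Q * (B t' t).im) (t t' : W) :
    ∑ i, (a i : ℂ) * Fform B (lam i) t t' = Q * B t' t := by
  let f : W →ₗ[ℂ] ℂ := ∑ i, ((a i : ℂ) * (B t (lam i) + B (lam i) t)) • B.flip (lam i)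
  have hf : ∀ t', ∑ i, (a i : ℂ) * Fform B (lam i) t t' = f t' := by
    simp [f, Fform, add_mul, mul_assoc]
  have hlin : f = (Q : ℂ) • B.flip t := Complex.linearMap_ext_of_im fun t' ↦ by
    simpa [← hf, Complex.im_sum] using hQ t t'
  simpa [hf] using LinearMap.congr_fun hlin t'

theorem apply_rankOneSum_eq_of_sum_mul_Fform_eq (Q : ℂ)
    (h : ∀ t t', ∑ i, c i * Fform B (lam i) t t' = Q * B t' t) (t' t : W) :
    B (rankOneSum B lam c t') t = Q * B t' t := by
  have hparts : ∀ t, (∑ i, (c i * B t' (lam i)) • B.flip (lam i)) t =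
      (Q • B t' - B (rankOneSum B lam c t')) t := fun t ↦ by
    rw [LinearMap.sub_apply, LinearMap.smul_apply, smul_eq_mul, ← h t t', sum_mul_Fform]
    simpa using Finset.sum_congr rfl fun i _ ↦ by ring
  have hzero := Complex.linearMap_eq_zero_of_eq_conjLinear hparts t
  rw [hparts, LinearMap.sub_apply, sub_eq_zero] at hzero
  exact hzero.symm

theorem eq_smul_id_of_forall_form_eq (hanis : ∀ w, B w w = 0 → w = 0) (f : W →ₗ[ℂ] W) (Q : ℂ)
    (h : ∀ t' t, B (f t') t = Q * B t' t) : f = Q • LinearMap.id := by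
  ext t'
  have hv : B (f t' - Q • t') (f t' - Q • t') = 0 := by simp [h]
  exact sub_eq_zero.mp (hanis _ hv)

end Sesquilinear

/-- Algebraic core of the torsion criterion for linear combinations of local
Heegner divisors: `Σᵢ aᵢ·Im F_{λᵢ}(t,t')` is a real multiple of `Im⟨t',t⟩` iff
`Σᵢ aᵢ·[F_{λᵢ}(t,t') − (⟨λᵢ,λᵢ⟩/n)·⟨t',t⟩] = 0` for all `t,t'`. -/
theorem torsion_criterion_linear_combination {W : Type*} [AddCommGroup W]
    [Module ℂ W] [FiniteDimensional ℂ W]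
    (n : ℕ) (hn : 1 ≤ n) (hdim : Module.finrank ℂ W = n)
    (B : W →ₗ[ℂ] W →ₛₗ[starRingEnd ℂ] ℂ)
    (hherm : ∀ v w : W, B w v = starRingEnd ℂ (B v w))
    (hneg : ∀ w : W, w ≠ 0 → (B w w).re < 0)
    (r : ℕ) (lam : Fin r → W) (a : Fin r → ℝ) :
    (∃ Q : ℝ, ∀ t t' : W,
        ∑ i, a i * (Fform B (lam i) t t').im = Q * (B t' t).im)
      ↔ ∀ t t' : W, ∑ i, (a i : ℂ) *
          (Fform B (lam i) t t' - (B (lam i) (lam i) / (n : ℂ)) * B t' t) = 0 := by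
  have hn0 : (n : ℂ) ≠ 0 := by exact_mod_cast (by omega : n ≠ 0)
  have hanis : ∀ w, B w w = 0 → w = 0 := fun w hw ↦
    by_contra fun h ↦ (hneg w h).ne (by simp [hw])
  have hnorm : ∑ i, (a i : ℂ) * B (lam i) (lam i) =
      ((∑ i, a i * (B (lam i) (lam i)).re : ℝ) : ℂ) := by
    push_cast
    refine Finset.sum_congr rfl fun i _ ↦ congrArg _ ?_
    exact (Complex.conj_eq_iff_re.mp (hherm _ _).symm).symm
  have hrhs : ∀ t t' : W, ∑ i, (a i : ℂ) * (B (lam i) (lam i) / n * B t' t) =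
      (∑ i, (a i : ℂ) * B (lam i) (lam i)) / n * B t' t := fun t t' ↦ by
    simp only [Finset.sum_mul, Finset.sum_div, mul_assoc, mul_div_assoc]
  simp_rw [mul_sub, Finset.sum_sub_distrib, sub_eq_zero, hrhs]
  constructor
  · rintro ⟨Q, hQ⟩ t t'
    have hF := sum_mul_Fform_eq_of_im B lam a Q hQ
    have hM := eq_smul_id_of_forall_form_eq B hanis _ _
      (apply_rankOneSum_eq_of_sum_mul_Fform_eq B lam _ _ hF)
    have htr : ∑ i, (a i : ℂ) * B (lam i) (lam i) = Q * n := by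
      rw [← trace_rankOneSum, hM, map_smul, LinearMap.trace_id, hdim, smul_eq_mul]
    rw [hF, htr, mul_div_cancel_right₀ _ hn0]
  · intro h
    refine ⟨(∑ i, a i * (B (lam i) (lam i)).re) / n, fun t t' ↦ ?_⟩
    simpa [hnorm, Complex.im_sum] using congrArg Complex.im (h t t')
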